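/- Let m, d ≥ 1, let W₀, W, W' : Fin m → ℝ^d, and let A ⊆ Fin m. Define L(x, y) := (1/m) · ⟨x, y⟩ · Σ_{j ∈ A} 1{⟨W_j, y⟩ ≥ 0} · ( 1{⟨W'_j, x⟩ ≥ 0} − 1{⟨W_j, x⟩ ≥ 0} ). Then for all x, y ∈ ℝ^d with ‖x‖ ≤ 1 and ‖y‖ ≤ 1, |L(x, y)| ≤ (S_{W,W₀}(x) + S_{W',W₀}(x)) / m. -/
import Mathlib


open RealInnerProductSpace

open Classical in
/-- The number of neurons whose activation sign at `x` differs between the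
weights `W` and the weights `W₀`. -/
noncomputable def signFlips (m d : ℕ) (W W₀ : Fin m → EuclideanSpace ℝ (Fin d))
    (x : EuclideanSpace ℝ (Fin d)) : ℕ :=
  (Finset.univ.filter fun i : Fin m => ¬((0 ≤ ⟪W i, x⟫) ↔ (0 ≤ ⟪W₀ i, x⟫))).card

open Classical in
/-- The cross-term kernel `L` built from the activation-sign changes between two
consecutive weight configurations is bounded by the total fraction of sign flips
relative to the initialization. -/
theorem crossKernel_le_signFlips (m d : ℕ) (hm : 1 ≤ m) (hd : 1 ≤ d)
    (W₀ W W' : Fin m → EuclideanSpace ℝ (Fin d)) (A : Finset (Fin m))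
    (L : EuclideanSpace ℝ (Fin d) → EuclideanSpace ℝ (Fin d) → ℝ)
    (hL : ∀ x y, L x y = ((1 : ℝ) / m) * ⟪x, y⟫ *
      ∑ j ∈ A, (if 0 ≤ ⟪W j, y⟫ then (1 : ℝ) else 0) *
        ((if 0 ≤ ⟪W' j, x⟫ then (1 : ℝ) else 0) - (if 0 ≤ ⟪W j, x⟫ then (1 : ℝ) else 0))) :
    ∀ x y : EuclideanSpace ℝ (Fin d), ‖x‖ ≤ 1 → ‖y‖ ≤ 1 →
      |L x y| ≤ ((signFlips m d W W₀ x : ℝ) + (signFlips m d W' W₀ x : ℝ)) / m := by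
  intro x y hx hy
  have hm0 : (0:ℝ) < m := by exact_mod_cast hm
  rw [hL]
  -- bound inner product
  have hxy : |⟪x, y⟫| ≤ 1 := by
    calc |⟪x, y⟫| ≤ ‖x‖ * ‖y‖ := abs_real_inner_le_norm x y
    _ ≤ 1 := by nlinarith [norm_nonneg x, norm_nonneg y]
  -- per-term bound
  set T : Finset (Fin m) :=
    Finset.univ.filter fun j : Fin m => ¬((0 ≤ ⟪W j, x⟫) ↔ (0 ≤ ⟪W' j, x⟫)) with hT
  have hterm : ∀ j : Fin m,
      |(if 0 ≤ ⟪W j, y⟫ then (1 : ℝ) else 0) *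
        ((if 0 ≤ ⟪W' j, x⟫ then (1 : ℝ) else 0) - (if 0 ≤ ⟪W j, x⟫ then (1 : ℝ) else 0))|
      ≤ if j ∈ T then (1:ℝ) else 0 := by
    intro j
    by_cases h : (0 ≤ ⟪W j, x⟫) ↔ (0 ≤ ⟪W' j, x⟫)
    · have hj : j ∉ T := by
        rw [hT, Finset.mem_filter]
        exact fun hc => hc.2 h
      rw [if_neg hj]
      by_cases h1 : 0 ≤ ⟪W j, x⟫
      · rw [if_pos h1, if_pos (h.mp h1)]
        simp
      · rw [if_neg h1, if_neg (fun h2 => h1 (h.mpr h2))]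
        simp
    · have hj : j ∈ T := by
        rw [hT, Finset.mem_filter]
        exact ⟨Finset.mem_univ j, h⟩
      rw [if_pos hj]
      by_cases h1 : 0 ≤ ⟪W j, y⟫ <;> by_cases h2 : 0 ≤ ⟪W' j, x⟫ <;>
        by_cases h3 : 0 ≤ ⟪W j, x⟫ <;>
        simp only [if_pos, if_neg, h1, h2, h3, if_true, if_false] <;> norm_num
  have hsum : |∑ j ∈ A, (if 0 ≤ ⟪W j, y⟫ then (1 : ℝ) else 0) *
        ((if 0 ≤ ⟪W' j, x⟫ then (1 : ℝ) else 0) - (if 0 ≤ ⟪W j, x⟫ then (1 : ℝ) else 0))|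
      ≤ (T.card : ℝ) := by
    calc _ ≤ ∑ j ∈ A, |(if 0 ≤ ⟪W j, y⟫ then (1 : ℝ) else 0) *
        ((if 0 ≤ ⟪W' j, x⟫ then (1 : ℝ) else 0) - (if 0 ≤ ⟪W j, x⟫ then (1 : ℝ) else 0))| :=
        Finset.abs_sum_le_sum_abs _ _
    _ ≤ ∑ j ∈ A, (if j ∈ T then (1:ℝ) else 0) := Finset.sum_le_sum fun j _ => hterm j
    _ ≤ ∑ j : Fin m, (if j ∈ T then (1:ℝ) else 0) :=
        Finset.sum_le_sum_of_subset_of_nonneg (Finset.subset_univ A)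
          (fun j _ _ => by positivity)
    _ = (T.card : ℝ) := by simp
  -- T.card ≤ signFlips W + signFlips W'
  have hcard : (T.card : ℝ) ≤ (signFlips m d W W₀ x : ℝ) + (signFlips m d W' W₀ x : ℝ) := by
    have : T.card ≤ signFlips m d W W₀ x + signFlips m d W' W₀ x := by
      have hsub : T ⊆ (Finset.univ.filter fun i : Fin m => ¬((0 ≤ ⟪W i, x⟫) ↔ (0 ≤ ⟪W₀ i, x⟫)))
          ∪ (Finset.univ.filter fun i : Fin m => ¬((0 ≤ ⟪W' i, x⟫) ↔ (0 ≤ ⟪W₀ i, x⟫))) := by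
        intro j hj
        simp only [hT, Finset.mem_filter, Finset.mem_union, Finset.mem_univ, true_and] at *
        by_contra hc
        push_neg at hc
        exact hj (hc.1.trans hc.2.symm)
      calc T.card ≤ _ := Finset.card_le_card hsub
      _ ≤ _ := Finset.card_union_le _ _
    exact_mod_cast this
  set S : ℝ := ∑ j ∈ A, (if 0 ≤ ⟪W j, y⟫ then (1 : ℝ) else 0) *
        ((if 0 ≤ ⟪W' j, x⟫ then (1 : ℝ) else 0) - (if 0 ≤ ⟪W j, x⟫ then (1 : ℝ) else 0)) with hS
  have : |(1:ℝ) / m * ⟪x, y⟫ * S| = (1/m) * (|⟪x, y⟫| * |S|) := by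
    rw [abs_mul, abs_mul, mul_assoc, abs_of_nonneg (a := (1:ℝ)/m) (by positivity)]
  rw [this]
  have h1 : |⟪x, y⟫| * |S| ≤ 1 * ((signFlips m d W W₀ x : ℝ) + (signFlips m d W' W₀ x : ℝ)) :=
    mul_le_mul hxy (hsum.trans hcard) (abs_nonneg _) one_pos.le
  calc (1/m) * (|⟪x, y⟫| * |S|)
      ≤ (1/m) * (1 * ((signFlips m d W W₀ x : ℝ) + (signFlips m d W' W₀ x : ℝ))) :=
        mul_le_mul_of_nonneg_left h1 (by positivity)
    _ = _ := by ring
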